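/- arXiv:2601.18312 — 2 statements merged into one kernel-verified Lean document; each statement's English description precedes it below -/
import Mathlib

section
/- Let p, w ∈ AP₊(ℝ,ℝ) and q : ℝ → ℝ Bohr almost periodic, with v = (1/p, q, w), and fix λ ∈ ℝ. Let φ : ℝ → ℝ be a nontrivial solution of −(pφ')' + qφ = λwφ. Then for every x > 0 the set {s ∈ [0,x) : φ(s) = 0} is finite, and lim_{x→+∞} π·#{s ∈ [0,x) : φ(s) = 0} / x = ρ(λ, v); in particular the limit exists and is independent of the choice of nontrivial solution φ. -/
open Filter Topology MeasureTheory Set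

noncomputable section

/-- A continuous function `f : ℝ → E` is Bohr almost periodic if every sequence of reals
has a subsequence along which the translates converge uniformly on `ℝ`. -/
def BohrAP {E : Type*} [NormedAddCommGroup E] (f : ℝ → E) : Prop :=
  Continuous f ∧ ∀ t : ℕ → ℝ, ∃ (s : ℕ → ℕ) (g : ℝ → E),
    StrictMono s ∧ TendstoUniformly (fun n x => f (x + t (s n))) g atTop

/-- The hull of `f`: uniform limits of sequences of translates of `f`. -/
def Hull {E : Type*} [NormedAddCommGroup E] (f : ℝ → E) : Set (ℝ → E) :=
  {g | ∃ t : ℕ → ℝ, TendstoUniformly (fun n x => f (x + t n)) g atTop}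

/-- `AP₊(ℝ,ℝ)`: Bohr almost periodic functions all of whose hull elements are
strictly positive at every point. -/
def APplus (f : ℝ → ℝ) : Prop :=
  BohrAP f ∧ ∀ g ∈ Hull f, ∀ x : ℝ, 0 < g x

/-- The set of Fourier exponents of `f`: those `l` for which the Fourier coefficient
`lim_{T→∞} (1/T) ∫₀^T f(x) e^{-i l x} dx` is nonzero (encoded as: the averages do not
tend to `0`; for Bohr almost periodic `f` the limit always exists). -/
def freqSet (f : ℝ → ℝ) : Set ℝ :=
  {l : ℝ | ¬ Tendsto
      (fun T : ℝ => (T : ℂ)⁻¹ *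
        ∫ x in (0:ℝ)..T, (f x : ℂ) * Complex.exp (-(Complex.I * (l : ℂ) * (x : ℂ))))
      atTop (𝓝 0)}

/-- The frequency module of `f`: the smallest additive subgroup of `ℝ` containing the
Fourier exponents of `f`. -/
def freqModule (f : ℝ → ℝ) : AddSubgroup ℝ := AddSubgroup.closure (freqSet f)

/-- `θ` solves the Prüfer equation `θ' = a cos²θ + (λ w - q) sin²θ`. -/
def IsPruefer (a q w : ℝ → ℝ) (lam : ℝ) (θ : ℝ → ℝ) : Prop :=
  ∀ x : ℝ, HasDerivAt θ
    (a x * Real.cos (θ x) ^ 2 + (lam * w x - q x) * Real.sin (θ x) ^ 2) x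

/-- `φ` is a (real) solution of the Sturm–Liouville equation `-(pφ')' + qφ = λ w φ`:
`φ` is `C¹`, `pφ'` is `C¹`, and the equation holds everywhere. -/
def IsSLSolution (p q w : ℝ → ℝ) (lam : ℝ) (φ : ℝ → ℝ) : Prop :=
  ContDiff ℝ 1 φ ∧ ContDiff ℝ 1 (fun x => p x * deriv φ x) ∧
    ∀ x : ℝ, -(deriv (fun y => p y * deriv φ y) x) + q x * φ x = lam * w x * φ x

/-!
Write `pφ' + iφ = exp Λ` (possible since this vector never vanishes, by uniqueness for the linear
first-order system) and let `θ = Im Λ`. Then `θ` solves the Prüfer equation and `φ` vanishes exactly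
where `θ ∈ πℤ`. There `θ' = 1/p > 0`, so `θ` crosses each level `kπ` at most once and only upwards:
the zeros of `φ` in `[0, x)` correspond to the multiples of `π` in `[θ 0, θ x)`, so their number
`N(x)` satisfies `|π N(x) - (θ x - θ 0)| ≤ π`. The Prüfer equation is `π`-periodic in `θ`, so after
a shift by a multiple of `π` any other solution `θ₀` satisfies `θ₀ ≤ θ ≤ θ₀ + π` at `0`, hence on
`[0, ∞)` by comparison, and `θ x - θ 0` stays within `π` of `θ₀ x - θ₀ 0`. Dividing by `x` gives
the limit.
-/

open Real
open scoped NNReal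
open Complex (I)

theorem HasDerivAt.eventually_nhdsLT_lt {f : ℝ → ℝ} {f' x : ℝ} (hf : HasDerivAt f f' x)
    (hf' : 0 < f') : ∀ᶠ y in 𝓝[<] x, f y < f x := by
  filter_upwards [((hasDerivAt_iff_tendsto_slope.mp hf).mono_left (nhdsLT_le_nhdsNE x)).eventually
    (eventually_gt_nhds hf'), self_mem_nhdsWithin] with y hy hyx
  exact (slope_pos_iff_gt hyx).mp hy

theorem lt_apply_of_le_apply_of_deriv_pos_at_level {θ d : ℝ → ℝ} {c s t : ℝ}
    (hd : ∀ u, HasDerivAt θ (d u) u) (hpos : ∀ u, θ u = c → 0 < d u)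
    (hs : c ≤ θ s) (hst : s < t) : c < θ t := by
  have hθ : Continuous θ := continuous_iff_continuousAt.2 fun u => (hd u).continuousAt
  have hle : ∀ u ∈ Icc s t, c ≤ θ u :=
    image_le_of_deriv_right_lt_deriv_boundary' continuousOn_const
      (fun u _ => (hasDerivAt_const u c).hasDerivWithinAt) hs hθ.continuousOn
      (fun u _ => (hd u).hasDerivWithinAt) fun u _ hu => hpos u hu.symm
  refine (hle t ⟨hst.le, le_rfl⟩).lt_of_ne fun hct => ?_
  obtain ⟨u, hu, hsu⟩ :=
    (((hd t).eventually_nhdsLT_lt (hpos t hct.symm)).and (Ioo_mem_nhdsLT hst)).exists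
  exact (hle u ⟨hsu.1.le, hsu.2.le⟩).not_gt (hct ▸ hu)

theorem ceil_div_pi_mul_pi_of_sin_eq_zero {y : ℝ} (hy : sin y = 0) : (⌈y / π⌉ : ℝ) * π = y := by
  obtain ⟨n, rfl⟩ := sin_eq_zero_iff.1 hy
  simp [pi_ne_zero]

theorem abs_toNat_ceil_sub_ceil_sub_le {a b : ℝ} (h : a - 1 < b) :
    |((⌈b⌉ - ⌈a⌉).toNat : ℝ) - (b - a)| ≤ 1 := by
  have ha := Int.le_ceil a; have ha' := Int.ceil_lt_add_one a
  have hb := Int.le_ceil b; have hb' := Int.ceil_lt_add_one b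
  rw [abs_le]
  rcases le_or_gt ⌈a⌉ ⌈b⌉ with hab | hab
  · have hcast : ((⌈b⌉ - ⌈a⌉).toNat : ℝ) = ⌈b⌉ - ⌈a⌉ := by
      exact_mod_cast Int.toNat_of_nonneg (sub_nonneg.2 hab)
    constructor <;> linarith
  · have hba : (⌈b⌉ : ℝ) ≤ ⌈a⌉ - 1 := by exact_mod_cast Int.le_sub_one_of_lt hab
    rw [Int.toNat_of_nonpos (by omega)]
    constructor <;> push_cast <;> linarith

section SinZeros

variable {θ d : ℝ → ℝ}

theorem strictMonoOn_of_deriv_pos_at_sin_zero (hd : ∀ u, HasDerivAt θ (d u) u)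
    (hpos : ∀ u, sin (θ u) = 0 → 0 < d u) : StrictMonoOn θ {s | sin (θ s) = 0} :=
  fun _ hs _ _ hst =>
    lt_apply_of_le_apply_of_deriv_pos_at_level hd (fun u hu => hpos u (hu ▸ hs)) le_rfl hst

theorem sub_pi_lt_of_deriv_pos_at_sin_zero (hd : ∀ u, HasDerivAt θ (d u) u)
    (hpos : ∀ u, sin (θ u) = 0 → 0 < d u) {x : ℝ} (hx : 0 < x) : θ 0 - π < θ x := by
  set k := ⌊θ 0 / π⌋
  have hk : (k : ℝ) * π ≤ θ 0 := (le_div_iff₀ pi_pos).1 (Int.floor_le _)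
  have hk' : θ 0 - π < k * π := by
    have := (div_lt_iff₀ pi_pos).1 (sub_lt_iff_lt_add.1 (Int.sub_one_lt_floor (θ 0 / π)))
    linarith
  refine hk'.trans (lt_apply_of_le_apply_of_deriv_pos_at_level hd (fun u hu => hpos u ?_) hk hx)
  rw [hu]; exact sin_int_mul_pi k

theorem image_ceil_div_pi_sin_zeros (hd : ∀ u, HasDerivAt θ (d u) u)
    (hpos : ∀ u, sin (θ u) = 0 → 0 < d u) {x : ℝ} (hx : 0 < x) :
    (fun s => ⌈θ s / π⌉) '' {s ∈ Ico 0 x | sin (θ s) = 0} = Ico ⌈θ 0 / π⌉ ⌈θ x / π⌉ := by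
  ext k
  simp only [mem_image, mem_Ico, Int.ceil_le, Int.lt_ceil, div_le_iff₀ pi_pos,
    lt_div_iff₀ pi_pos]
  have hlevel : ∀ s, sin (θ s) = 0 → ∀ u, θ u = θ s → 0 < d u := fun s hs u hu => hpos u (hu ▸ hs)
  constructor
  · rintro ⟨s, ⟨⟨hs0, hsx⟩, hs⟩, rfl⟩
    rw [ceil_div_pi_mul_pi_of_sin_eq_zero hs]
    refine ⟨?_, lt_apply_of_le_apply_of_deriv_pos_at_level hd (hlevel s hs) le_rfl hsx⟩
    rcases hs0.eq_or_lt with rfl | hs0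
    · exact le_rfl
    · exact le_of_not_gt fun h =>
        (lt_apply_of_le_apply_of_deriv_pos_at_level hd (hlevel s hs) h.le hs0).false
  · intro hk
    have hθ : Continuous θ := continuous_iff_continuousAt.2 fun u => (hd u).continuousAt
    obtain ⟨s, hs, hθs⟩ := intermediate_value_Ico hx.le hθ.continuousOn hk
    have hsin : sin (θ s) = 0 := by rw [hθs]; exact sin_int_mul_pi k
    exact ⟨s, ⟨hs, hsin⟩, by rw [hθs]; simp [pi_ne_zero]⟩

theorem abs_pi_mul_ncard_sin_zeros_sub_le (hd : ∀ u, HasDerivAt θ (d u) u)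
    (hpos : ∀ u, sin (θ u) = 0 → 0 < d u) {x : ℝ} (hx : 0 < x) :
    {s ∈ Ico 0 x | sin (θ s) = 0}.Finite ∧
      |π * ({s ∈ Ico 0 x | sin (θ s) = 0}.ncard : ℝ) - (θ x - θ 0)| ≤ π := by
  set Z := {s ∈ Ico 0 x | sin (θ s) = 0}
  have hinj : InjOn (fun s => ⌈θ s / π⌉) Z := fun s hs t ht hst =>
    (strictMonoOn_of_deriv_pos_at_sin_zero hd hpos).injOn hs.2 ht.2 <| by
      rw [← ceil_div_pi_mul_pi_of_sin_eq_zero hs.2, ← ceil_div_pi_mul_pi_of_sin_eq_zero ht.2]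
      exact congrArg (fun k : ℤ => (k : ℝ) * π) hst
  have himage := image_ceil_div_pi_sin_zeros hd hpos hx
  refine ⟨Finite.of_finite_image (himage ▸ finite_Ico _ _) hinj, ?_⟩
  have hcard : Z.ncard = (⌈θ x / π⌉ - ⌈θ 0 / π⌉).toNat := by
    rw [← hinj.ncard_image, himage, ← Finset.coe_Ico, ncard_coe_finset, Int.card_Ico]
  have hlow : θ 0 / π - 1 < θ x / π := by
    rw [div_sub_one pi_ne_zero, div_lt_div_iff_of_pos_right pi_pos]
    exact sub_pi_lt_of_deriv_pos_at_sin_zero hd hpos hx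
  calc |π * (Z.ncard : ℝ) - (θ x - θ 0)|
      = π * |((⌈θ x / π⌉ - ⌈θ 0 / π⌉).toNat : ℝ) - (θ x / π - θ 0 / π)| := by
        rw [hcard, ← abs_of_pos pi_pos, ← abs_mul, abs_of_pos pi_pos]
        field_simp
    _ ≤ π * 1 := by gcongr; exact abs_toNat_ceil_sub_ceil_sub_le hlow
    _ = π := mul_one π

end SinZeros

theorem ODE_solution_unique_univ_of_continuous_lipschitzWith {E : Type*} [NormedAddCommGroup E]
    [NormedSpace ℝ E] {v : ℝ → E → E} {K : ℝ → ℝ≥0} (hK : Continuous K)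
    (hv : ∀ t, LipschitzWith (K t) (v t)) {f g : ℝ → E} (hf : ∀ t, HasDerivAt f (v t (f t)) t)
    (hg : ∀ t, HasDerivAt g (v t (g t)) t) {t₀ : ℝ} (heq : f t₀ = g t₀) : f = g := by
  ext t
  obtain ⟨A, B, ht, ht₀⟩ : ∃ A B, t ∈ Ioo A B ∧ t₀ ∈ Ioo A B :=
    ⟨min t t₀ - 1, max t t₀ + 1, by grind⟩
  obtain ⟨M, hM⟩ := (isCompact_Icc (a := A) (b := B)).bddAbove_image hK.continuousOn
  exact ODE_solution_unique_of_mem_Ioo (s := fun _ => univ)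
    (fun s hs => ((hv s).weaken (hM ⟨s, Ioo_subset_Icc_self hs, rfl⟩)).lipschitzOnWith) ht₀
    (fun s _ => ⟨hf s, trivial⟩) (fun s _ => ⟨hg s, trivial⟩) heq ht

theorem ODE_solution_le_of_le {v : ℝ → ℝ → ℝ} {K : ℝ → ℝ≥0} (hK : Continuous K)
    (hv : ∀ t, LipschitzWith (K t) (v t)) {f g : ℝ → ℝ} (hf : ∀ t, HasDerivAt f (v t (f t)) t)
    (hg : ∀ t, HasDerivAt g (v t (g t)) t) {t₀ t : ℝ} (h₀ : f t₀ ≤ g t₀) (ht : t₀ ≤ t) :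
    f t ≤ g t := by
  by_contra! hlt
  have hcont : Continuous fun s => g s - f s :=
    continuous_iff_continuousAt.2 fun s => ((hg s).sub (hf s)).continuousAt
  obtain ⟨c, -, hc⟩ := intermediate_value_Icc' ht hcont.continuousOn
    ⟨(sub_neg.2 hlt).le, sub_nonneg.2 h₀⟩
  have hfg :=
    ODE_solution_unique_univ_of_continuous_lipschitzWith hK hv hf hg (sub_eq_zero.1 hc).symm
  exact hlt.ne' (congrFun hfg t)

theorem lipschitzWith_mul_cos_sq_add_mul_sin_sq (a b : ℝ) :
    LipschitzWith ‖b - a‖₊ fun y => a * cos y ^ 2 + b * sin y ^ 2 := by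
  have hd : ∀ y, HasDerivAt (fun y => a * cos y ^ 2 + b * sin y ^ 2) ((b - a) * sin (2 * y)) y := by
    intro y
    refine ((((hasDerivAt_cos y).pow 2).const_mul a).add
      (((hasDerivAt_sin y).pow 2).const_mul b)).congr_deriv ?_
    rw [sin_two_mul]; ring
  refine lipschitzWith_of_nnnorm_deriv_le (fun y => (hd y).differentiableAt) fun y => ?_
  rw [(hd y).deriv, nnnorm_mul]
  refine mul_le_of_le_one_right zero_le ?_
  rw [← NNReal.coe_le_coe, coe_nnnorm, Real.norm_eq_abs, NNReal.coe_one]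
  exact abs_sin_le_one _

theorem tendsto_div_of_abs_sub_le {f g : ℝ → ℝ} {ρ C : ℝ}
    (hg : Tendsto (fun x => g x / x) atTop (𝓝 ρ)) (hfg : ∀ᶠ x in atTop, |f x - g x| ≤ C) :
    Tendsto (fun x => f x / x) atTop (𝓝 ρ) := by
  have h0 : Tendsto (fun x => (f x - g x) / x) atTop (𝓝 0) := by
    refine squeeze_zero_norm' ?_ (tendsto_const_nhds (x := C) |>.div_atTop tendsto_id)
    filter_upwards [hfg, eventually_gt_atTop 0] with x hx hx0
    rw [norm_div, Real.norm_eq_abs, Real.norm_eq_abs, abs_of_pos hx0]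
    exact div_le_div_of_nonneg_right hx hx0.le
  simpa [← add_div] using hg.add h0

theorem exists_hasDerivAt_exp_eq {z z' : ℝ → ℂ} (hz : ∀ x, HasDerivAt z (z' x) x)
    (hz' : Continuous z') (hz0 : ∀ x, z x ≠ 0) :
    ∃ Λ : ℝ → ℂ, (∀ x, HasDerivAt Λ (z' x / z x) x) ∧ ∀ x, Complex.exp (Λ x) = z x := by
  have hzc : Continuous z := continuous_iff_continuousAt.2 fun x => (hz x).continuousAt
  set Λ : ℝ → ℂ := fun x => Complex.log (z 0) + ∫ t in (0 : ℝ)..x, z' t / z t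
  have hΛ : ∀ x, HasDerivAt Λ (z' x / z x) x := fun x =>
    ((hz'.div hzc hz0).integral_hasStrictDerivAt 0 x).hasDerivAt.const_add _
  refine ⟨Λ, hΛ, fun x => ?_⟩
  have hconst : ∀ y, HasDerivAt (fun u => z u * Complex.exp (-Λ u)) 0 y := by
    intro y
    refine ((hz y).mul (hΛ y).neg.cexp).congr_deriv ?_
    field_simp [hz0 y]
    ring
  have h := is_const_of_deriv_eq_zero (fun y => (hconst y).differentiableAt)
    (fun y => (hconst y).deriv) x 0
  simp only [Λ, intervalIntegral.integral_same, add_zero, Complex.exp_neg,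
    Complex.exp_log (hz0 0), mul_inv_cancel₀ (hz0 0)] at h
  exact ((mul_inv_eq_one₀ (Complex.exp_ne_zero _)).1 h).symm

/-- The linear system `ψ' = -b φ`, `φ' = a ψ` acting on `ψ + φ i`. For `ψ = pφ'`, `a = p⁻¹` and
`b = λw - q` it is the Sturm–Liouville equation. -/
def slSystem (a b : ℝ) : ℂ →L[ℝ] ℂ :=
  a • Complex.reCLM.smulRight I - b • Complex.imCLM.smulRight (1 : ℂ)

@[simp]
theorem slSystem_apply (a b : ℝ) (z : ℂ) :
    slSystem a b z = ↑(-(b * z.im)) + ↑(a * z.re) * I := by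
  simp [slSystem]
  ring

theorem continuous_slSystem {a b : ℝ → ℝ} (ha : Continuous a) (hb : Continuous b) :
    Continuous fun t => slSystem (a t) (b t) :=
  (ha.smul continuous_const).sub (hb.smul continuous_const)

theorem im_slSystem_div (a b r θ : ℝ) (hr : r ≠ 0) :
    (slSystem a b (↑(r * cos θ) + ↑(r * sin θ) * I) / (↑(r * cos θ) + ↑(r * sin θ) * I)).im =
      a * cos θ ^ 2 + b * sin θ ^ 2 := by
  have hden : (r * cos θ) * (r * cos θ) + (r * sin θ) * (r * sin θ) = r ^ 2 := by
    linear_combination r ^ 2 * sin_sq_add_cos_sq θ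
  simp only [slSystem_apply, Complex.div_im, Complex.normSq_apply, Complex.add_re, Complex.add_im,
    Complex.ofReal_re, Complex.ofReal_im, Complex.mul_re, Complex.mul_im, Complex.I_re,
    Complex.I_im, mul_zero, mul_one, sub_zero, zero_add, add_zero]
  rw [hden]
  field_simp
  ring

theorem eq_zero_of_hasDerivAt_clm_apply {E : Type*} [NormedAddCommGroup E] [NormedSpace ℝ E]
    {L : ℝ → E →L[ℝ] E} (hL : Continuous L) {z : ℝ → E} (hz : ∀ t, HasDerivAt z (L t (z t)) t)
    {t₀ : ℝ} (h₀ : z t₀ = 0) : z = 0 :=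
  ODE_solution_unique_univ_of_continuous_lipschitzWith hL.nnnorm (fun t => (L t).lipschitz) hz
    (fun t => by simp) h₀

namespace IsSLSolution

variable {p q w φ : ℝ → ℝ} {lam : ℝ}

theorem hasDerivAt (hφ : IsSLSolution p q w lam φ) (hp0 : ∀ x, p x ≠ 0) (x : ℝ) :
    HasDerivAt φ ((p x)⁻¹ * (p x * deriv φ x)) x := by
  rw [inv_mul_cancel_left₀ (hp0 x)]
  exact (hφ.1.differentiable one_ne_zero x).hasDerivAt

theorem hasDerivAt_flux (hφ : IsSLSolution p q w lam φ) (x : ℝ) :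
    HasDerivAt (fun y => p y * deriv φ y) (-((lam * w x - q x) * φ x)) x := by
  refine (hφ.2.1.differentiable one_ne_zero x).hasDerivAt.congr_deriv ?_
  linarith [hφ.2.2 x]

theorem hasDerivAt_complex (hφ : IsSLSolution p q w lam φ) (hp0 : ∀ x, p x ≠ 0) (x : ℝ) :
    HasDerivAt (fun y => (↑(p y * deriv φ y) + ↑(φ y) * I : ℂ))
      (slSystem (p x)⁻¹ (lam * w x - q x) (↑(p x * deriv φ x) + ↑(φ x) * I)) x := by
  refine ((hφ.hasDerivAt_flux x).ofReal_comp.add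
    ((hφ.hasDerivAt hp0 x).ofReal_comp.mul_const I)).congr_deriv ?_
  simp

theorem exists_isPruefer (hφ : IsSLSolution p q w lam φ) (hp : Continuous p)
    (hp0 : ∀ x, p x ≠ 0) (hq : Continuous q) (hw : Continuous w) (hne : ∃ x, φ x ≠ 0) :
    ∃ θ, IsPruefer (fun x => (p x)⁻¹) q w lam θ ∧ ∀ x, φ x = 0 ↔ sin (θ x) = 0 := by
  set z : ℝ → ℂ := fun x => ↑(p x * deriv φ x) + ↑(φ x) * I
  have hz := hφ.hasDerivAt_complex hp0
  have hzc : Continuous z := continuous_iff_continuousAt.2 fun x => (hz x).continuousAt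
  have hL : Continuous fun t => slSystem (p t)⁻¹ (lam * w t - q t) :=
    continuous_slSystem (hp.inv₀ hp0) ((continuous_const.mul hw).sub hq)
  have hz0 : ∀ x, z x ≠ 0 := fun x hx => by
    obtain ⟨y, hy⟩ := hne
    have hzero := congrFun (eq_zero_of_hasDerivAt_clm_apply hL hz hx) y
    exact hy (by simpa [z] using congrArg Complex.im hzero)
  obtain ⟨Λ, hΛ, hexp⟩ := exists_hasDerivAt_exp_eq hz (hL.clm_apply hzc) hz0
  have hre : ∀ x, p x * deriv φ x = exp (Λ x).re * cos (Λ x).im := fun x => by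
    simpa [z, Complex.exp_re] using congrArg Complex.re (hexp x).symm
  have him : ∀ x, φ x = exp (Λ x).re * sin (Λ x).im := fun x => by
    simpa [z, Complex.exp_im] using congrArg Complex.im (hexp x).symm
  refine ⟨fun x => (Λ x).im, fun x => ?_, fun x => ?_⟩
  · have h := Complex.imCLM.hasFDerivAt.comp_hasDerivAt x (hΛ x)
    rw [Complex.imCLM_apply, hre, him, im_slSystem_div _ _ _ _ (exp_pos _).ne'] at h
    exact h
  · rw [him, mul_eq_zero, or_iff_right (exp_pos _).ne']

end IsSLSolution

namespace IsPruefer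

variable {a q w θ θ' : ℝ → ℝ} {lam : ℝ}

theorem add_int_mul_pi (hθ : IsPruefer a q w lam θ) (k : ℤ) :
    IsPruefer a q w lam fun x => θ x + k * π := by
  intro x
  have hsq : ((-1 : ℝ) ^ k) ^ 2 = 1 := by rw [← zpow_natCast, ← zpow_mul, mul_comm, zpow_mul]; simp
  simpa [cos_add_int_mul_pi, sin_add_int_mul_pi, mul_pow, hsq] using (hθ x).add_const (k * π)

theorem le_of_le (hθ : IsPruefer a q w lam θ) (hθ' : IsPruefer a q w lam θ')
    (ha : Continuous a) (hq : Continuous q) (hw : Continuous w) {t₀ t : ℝ}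
    (h₀ : θ t₀ ≤ θ' t₀) (ht : t₀ ≤ t) : θ t ≤ θ' t :=
  ODE_solution_le_of_le (((continuous_const.mul hw).sub hq).sub ha).nnnorm
    (fun t => lipschitzWith_mul_cos_sq_add_mul_sin_sq (a t) (lam * w t - q t)) hθ hθ' h₀ ht

theorem abs_sub_sub_le (hθ : IsPruefer a q w lam θ) (hθ' : IsPruefer a q w lam θ')
    (ha : Continuous a) (hq : Continuous q) (hw : Continuous w) {x : ℝ} (hx : 0 ≤ x) :
    |(θ x - θ 0) - (θ' x - θ' 0)| ≤ π := by
  obtain ⟨k, hk⟩ : ∃ k : ℤ, θ 0 + k * π ∈ Ico (θ' 0) (θ' 0 + π) :=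
    ⟨-toIcoDiv pi_pos (θ' 0) (θ 0), by
      simpa [sub_eq_add_neg] using sub_toIcoDiv_zsmul_mem_Ico pi_pos (θ' 0) (θ 0)⟩
  have hθk := hθ.add_int_mul_pi k
  have hlow := hθ'.le_of_le hθk ha hq hw hk.1 hx
  have hup := hθk.le_of_le (hθ'.add_int_mul_pi 1) ha hq hw (by simpa using hk.2.le) hx
  simp only [Int.cast_one, one_mul] at hup
  rw [abs_le]
  constructor <;> linarith [hk.1, hk.2]

theorem abs_pi_mul_ncard_sin_zeros_sub_le (hθ : IsPruefer a q w lam θ) (ha : ∀ x, 0 < a x)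
    {x : ℝ} (hx : 0 < x) :
    {s ∈ Ico 0 x | sin (θ s) = 0}.Finite ∧
      |π * ({s ∈ Ico 0 x | sin (θ s) = 0}.ncard : ℝ) - (θ x - θ 0)| ≤ π :=
  _root_.abs_pi_mul_ncard_sin_zeros_sub_le hθ (fun u hu => by simpa [cos_sq', hu] using ha u) hx

end IsPruefer

theorem self_mem_hull {E : Type*} [NormedAddCommGroup E] (f : ℝ → E) : f ∈ Hull f :=
  ⟨fun _ => 0, Metric.tendstoUniformly_iff.2 fun ε hε => by simp [hε]⟩

/-- geometric representation of the rotation number via zero counting. -/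
theorem rotation_number_zero_counting (p q w : ℝ → ℝ)
    (hp : APplus p) (hw : APplus w) (hq : BohrAP q) (lam ρ : ℝ)
    (hρ : ∃ θ : ℝ → ℝ, IsPruefer (fun x => (p x)⁻¹) q w lam θ ∧
      Tendsto (fun x => (θ x - θ 0) / x) atTop (𝓝 ρ))
    (φ : ℝ → ℝ) (hφ : IsSLSolution p q w lam φ) (hne : ∃ x : ℝ, φ x ≠ 0) :
    (∀ x : ℝ, 0 < x → {s ∈ Set.Ico (0:ℝ) x | φ s = 0}.Finite) ∧
    Tendsto (fun x : ℝ => Real.pi * (({s ∈ Set.Ico (0:ℝ) x | φ s = 0}).ncard : ℝ) / x)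
      atTop (𝓝 ρ) := by
  obtain ⟨θ₀, hθ₀, hlim⟩ := hρ
  have hp0 : ∀ x, 0 < p x := hp.2 p (self_mem_hull p)
  have ha : Continuous fun x => (p x)⁻¹ := hp.1.1.inv₀ fun x => (hp0 x).ne'
  obtain ⟨θ, hθ, hzero⟩ := hφ.exists_isPruefer hp.1.1 (fun x => (hp0 x).ne') hq.1 hw.1.1 hne
  have hzeros : ∀ x, {s ∈ Ico 0 x | φ s = 0} = {s ∈ Ico 0 x | sin (θ s) = 0} := fun x => by
    simp only [hzero]
  have hcount := fun x (hx : 0 < x) =>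
    hθ.abs_pi_mul_ncard_sin_zeros_sub_le (fun x => inv_pos.2 (hp0 x)) hx
  refine ⟨fun x hx => hzeros x ▸ (hcount x hx).1, ?_⟩
  refine tendsto_div_of_abs_sub_le (C := π + π) hlim ?_
  filter_upwards [eventually_gt_atTop 0] with x hx
  rw [hzeros]
  calc _ = |(π * ({s ∈ Ico 0 x | sin (θ s) = 0}.ncard : ℝ) - (θ x - θ 0)) +
        ((θ x - θ 0) - (θ₀ x - θ₀ 0))| := by ring_nf
    _ ≤ π + π := (abs_add_le _ _).trans <|
        add_le_add (hcount x hx).2 (hθ.abs_sub_sub_le hθ₀ ha hq.1 hw.1.1 hx.le)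
end
end

section
/- Limit point property: let p, w ∈ AP₊(ℝ,ℝ) and q : ℝ → ℝ Bohr almost periodic, and let z ∈ ℂ. If φ₁ and φ₂ are solutions of −(pφ')' + qφ = z·w·φ with ∫₀^{+∞} |φᵢ(x)|²·w(x) dx < ∞ for i = 1, 2, then φ₁ and φ₂ are linearly dependent over ℂ. Similarly, any two solutions that are square integrable with weight w on (−∞, 0] are linearly dependent. -/
/-!
With `p` and `w` bounded between positive constants (which is what `AP₊` provides) and `q`
bounded, this is the classical limit-point argument. For a solution `φ` that is `L²` on
`[0, ∞)`, the function `G = Re (φ̄ · p φ')` has derivative `p |φ'|² + Re (φ̄ (q - z w) φ)`,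
whose second term is integrable. Since `(|φ|²)' = 2 G / p` and `|φ|²` is integrable, `G` is
frequently bounded, hence so is the increasing function `∫ p |φ'|²`, and `φ'` is `L²` as well.
The Wronskian `p (φ₁ φ₂' - φ₂ φ₁')` of two solutions is constant, and after division by `p`
it is integrable on `[0, ∞)`, so it vanishes; by uniqueness for the first-order system
satisfied by `(φ, p φ')`, a vanishing Wronskian forces linear dependence. The reflection
`x ↦ -x` gives the statement on `(-∞, 0]`.
-/

open Filter Topology MeasureTheory Set

noncomputable section

/-- `φ : ℝ → ℂ` is a solution of `-(pφ')' + qφ = z w φ`. -/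
def IsSLSolutionC (p q w : ℝ → ℝ) (z : ℂ) (φ : ℝ → ℂ) : Prop :=
  ContDiff ℝ 1 φ ∧ ContDiff ℝ 1 (fun x => (p x : ℂ) * deriv φ x) ∧
    ∀ x : ℝ, -(deriv (fun y => (p y : ℂ) * deriv φ y) x) + (q x : ℂ) * φ x = z * (w x : ℂ) * φ x

open scoped RealInnerProductSpace

theorem not_integrableOn_Ici_of_eventually_le_norm {E : Type*} [NormedAddCommGroup E]
    {f : ℝ → E} {ε : ℝ} (hε : 0 < ε) (hf : ∀ᶠ x in atTop, ε ≤ ‖f x‖) (a : ℝ) :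
    ¬ IntegrableOn f (Ici a) := by
  intro hint
  obtain ⟨b, hb⟩ := eventually_atTop.1 hf
  have hconst : IntegrableOn (fun _ => ε) (Ici (max a b)) :=
    (hint.mono_set (Ici_subset_Ici.2 (le_max_left a b))).norm.mono'
      aestronglyMeasurable_const
      ((ae_restrict_iff' measurableSet_Ici).2 <| .of_forall fun x hx => by
        simpa [abs_of_pos hε] using hb x (le_trans (le_max_right a b) hx))
  simp [integrableOn_const_iff, hε.ne'] at hconst

theorem frequently_deriv_lt_of_integrableOn_Ici {f f' : ℝ → ℝ}
    (hf : ∀ x, HasDerivAt f (f' x) x) {a : ℝ} (hint : IntegrableOn f (Ici a)) {ε : ℝ}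
    (hε : 0 < ε) : ∃ᶠ x in atTop, f' x < ε := by
  by_contra! h
  obtain ⟨b, hb⟩ := eventually_atTop.1 h
  have hgrowth : ∀ x ≥ b, f b + ε * (x - b) ≤ f x := fun x hx => by
    have := (convex_Ici b).mul_sub_le_image_sub_of_le_deriv
      (fun y _ => (hf y).continuousAt.continuousWithinAt)
      (fun y _ => (hf y).differentiableAt.differentiableWithinAt)
      (fun y hy => by rw [(hf y).deriv]; exact hb y (interior_subset hy)) b self_mem_Ici x hx hx
    linarith
  have htop : Tendsto f atTop atTop :=
    tendsto_atTop_mono' _ (eventually_ge_atTop b |>.mono hgrowth) <|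
      tendsto_atTop_add_const_left _ _ <|
        (tendsto_id.atTop_add tendsto_const_nhds).const_mul_atTop hε
  refine not_integrableOn_Ici_of_eventually_le_norm one_pos ?_ a hint
  filter_upwards [htop.eventually_ge_atTop 1] with x hx
  exact hx.trans (le_abs_self _)

theorem integrableOn_Ici_of_hasDerivAt_of_frequently_le {G g r : ℝ → ℝ} {a A : ℝ}
    (hG : ∀ x, HasDerivAt G (g x + r x) x) (hgc : Continuous g) (hg : ∀ x, 0 ≤ g x)
    (hrc : Continuous r) (hr : IntegrableOn r (Ici a)) (hfreq : ∃ᶠ x in atTop, G x ≤ A) :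
    IntegrableOn g (Ici a) := by
  have hbound : ∀ x ≥ a, ∫ t in a..x, g t ≤ A - G a + ∫ t in Ici a, |r t| := by
    intro x hx
    obtain ⟨y, hxy, hy⟩ := hfreq.forall_exists_of_atTop x
    have hay : a ≤ y := hx.trans hxy
    have hFTC : (∫ t in a..y, g t) + ∫ t in a..y, r t = G y - G a := by
      rw [← intervalIntegral.integral_add (hgc.intervalIntegrable _ _)
        (hrc.intervalIntegrable _ _)]
      exact intervalIntegral.integral_eq_sub_of_hasDerivAt (fun t _ => hG t)
        ((hgc.add hrc).intervalIntegrable _ _)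
    have hr_le : -∫ t in a..y, r t ≤ ∫ t in Ici a, |r t| := by
      refine (neg_le_abs _).trans <| (intervalIntegral.abs_integral_le_integral_abs hay).trans ?_
      rw [intervalIntegral.integral_of_le hay]
      exact setIntegral_mono_set hr.abs (.of_forall fun t => abs_nonneg _)
        (show Ioc a y ⊆ Ici a from fun t ht => ht.1.le).eventuallyLE
    have hmono : ∫ t in a..x, g t ≤ ∫ t in a..y, g t :=
      intervalIntegral.integral_mono_interval le_rfl hx hxy (.of_forall hg)
        (hgc.intervalIntegrable _ _)
    linarith
  refine (integrableOn_Ici_iff_integrableOn_Ioi).2 <|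
    integrableOn_Ioi_of_intervalIntegral_norm_bounded (A - G a + ∫ t in Ici a, |r t|) a
      (fun _ => hgc.integrableOn_Ioc) tendsto_id <| (eventually_ge_atTop a).mono fun x hx => ?_
  simpa only [Real.norm_of_nonneg (hg _), id] using hbound x hx

theorem integrableOn_norm_sq_of_integrableOn_norm_sq_mul {E : Type*} [NormedAddCommGroup E]
    {φ : ℝ → E} {w : ℝ → ℝ} {b : ℝ} {s : Set ℝ} (hb : 0 < b) (hwb : ∀ x, b ≤ w x)
    (hφ : Continuous φ) (h : IntegrableOn (fun x => ‖φ x‖ ^ 2 * w x) s) :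
    IntegrableOn (fun x => ‖φ x‖ ^ 2) s :=
  (h.const_mul b⁻¹).mono' (hφ.norm.pow 2).aestronglyMeasurable <| .of_forall fun x => by
    rw [Real.norm_of_nonneg (by positivity), le_inv_mul_iff₀ hb]
    exact mul_comm b _ ▸ mul_le_mul_of_nonneg_left (hwb x) (by positivity)

theorem Integrable.mul_of_integrable_norm_sq {α 𝕜 : Type*} [MeasurableSpace α] {μ : Measure α}
    [NormedRing 𝕜] {u v : α → 𝕜} (hu : AEStronglyMeasurable u μ) (hv : AEStronglyMeasurable v μ)
    (hu2 : Integrable (fun x => ‖u x‖ ^ 2) μ) (hv2 : Integrable (fun x => ‖v x‖ ^ 2) μ) :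
    Integrable (fun x => u x * v x) μ :=
  ((memLp_two_iff_integrable_sq_norm hu).2 hu2).integrable_mul
    ((memLp_two_iff_integrable_sq_norm hv).2 hv2)

theorem integrableOn_Ici_comp_neg {E : Type*} [NormedAddCommGroup E] {f : ℝ → E} {c : ℝ}
    (hf : IntegrableOn f (Iic (-c))) : IntegrableOn (fun x => f (-x)) (Ici c) := by
  rw [← (Measure.measurePreserving_neg volume).integrableOn_comp_preimage
    (Homeomorph.neg ℝ).measurableEmbedding] at hf
  simpa [Function.comp_def] using hf

theorem integrableOn_inner_mul_self {φ V : ℝ → ℂ} {K : ℝ} {s : Set ℝ} (hφ : Continuous φ)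
    (hV : Continuous V) (hVK : ∀ x, ‖V x‖ ≤ K) (h : IntegrableOn (fun x => ‖φ x‖ ^ 2) s) :
    IntegrableOn (fun x => ⟪φ x, V x * φ x⟫) s :=
  (h.const_mul K).mono' (hφ.inner (hV.mul hφ)).aestronglyMeasurable <| .of_forall fun x =>
    calc ‖⟪φ x, V x * φ x⟫‖ ≤ ‖φ x‖ * ‖V x * φ x‖ := norm_inner_le_norm _ _
      _ = ‖V x‖ * ‖φ x‖ ^ 2 := by rw [norm_mul]; ring
      _ ≤ K * ‖φ x‖ ^ 2 := by gcongr; exact hVK x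

theorem Complex.real_inner_ofReal_mul_right (r : ℝ) (u v : ℂ) :
    ⟪u, (r : ℂ) * v⟫ = r * ⟪u, v⟫ := by
  rw [← Complex.real_smul, real_inner_smul_right]

theorem BohrAP.exists_norm_le {E : Type*} [NormedAddCommGroup E] {f : ℝ → E} (hf : BohrAP f) :
    ∃ C, ∀ x, ‖f x‖ ≤ C := by
  by_contra! h
  choose t ht using fun n : ℕ => h n
  obtain ⟨s, g, hs, hfg⟩ := hf.2 t
  have hlim : Tendsto (fun n => ‖f (0 + t (s n))‖) atTop (𝓝 ‖g 0‖) := (hfg.tendsto_at 0).norm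
  refine not_tendsto_atTop_of_tendsto_nhds hlim <|
    tendsto_atTop_mono (fun n => ?_) (tendsto_natCast_atTop_atTop.comp hs.tendsto_atTop)
  simpa using (ht (s n)).le

theorem APplus.exists_pos_le {f : ℝ → ℝ} (hf : APplus f) : ∃ b, 0 < b ∧ ∀ x, b ≤ f x := by
  by_contra! h
  choose t ht using fun n : ℕ => h (1 / (n + 1)) Nat.one_div_pos_of_nat
  obtain ⟨s, g, hs, hfg⟩ := hf.1.2 t
  have hlim : Tendsto (fun n => f (0 + t (s n))) atTop (𝓝 (g 0)) := hfg.tendsto_at 0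
  have hg0 : g 0 ≤ 0 :=
    le_of_tendsto_of_tendsto' hlim
      (tendsto_one_div_add_atTop_nhds_zero_nat.comp hs.tendsto_atTop)
      fun n => by simpa using (ht (s n)).le
  exact hg0.not_gt (hf.2 g ⟨_, hfg⟩ 0)

def wronskian (p : ℝ → ℝ) (φ₁ φ₂ : ℝ → ℂ) (x : ℝ) : ℂ :=
  φ₁ x * ((p x : ℂ) * deriv φ₂ x) - φ₂ x * ((p x : ℂ) * deriv φ₁ x)

namespace IsSLSolutionC

variable {p q w : ℝ → ℝ} {z : ℂ} {φ φ₁ φ₂ : ℝ → ℂ}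

theorem hasDerivAt (h : IsSLSolutionC p q w z φ) (x : ℝ) : HasDerivAt φ (deriv φ x) x :=
  (h.1.differentiable one_ne_zero x).hasDerivAt

theorem hasDerivAt_quasiDeriv (h : IsSLSolutionC p q w z φ) (x : ℝ) :
    HasDerivAt (fun y => (p y : ℂ) * deriv φ y) ((q x - z * w x) * φ x) x := by
  have := (h.2.1.differentiable one_ne_zero x).hasDerivAt
  rwa [show deriv (fun y => (p y : ℂ) * deriv φ y) x = (q x - z * w x) * φ x by
    linear_combination -h.2.2 x] at this

theorem continuous_deriv (h : IsSLSolutionC p q w z φ) : Continuous (deriv φ) :=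
  h.1.continuous_deriv le_rfl

theorem linear_combination (h₁ : IsSLSolutionC p q w z φ₁) (h₂ : IsSLSolutionC p q w z φ₂)
    (c₁ c₂ : ℂ) : IsSLSolutionC p q w z (fun x => c₁ * φ₁ x + c₂ * φ₂ x) := by
  have hquasi : (fun x => (p x : ℂ) * deriv (fun y => c₁ * φ₁ y + c₂ * φ₂ y) x) =
      fun x => c₁ * ((p x : ℂ) * deriv φ₁ x) + c₂ * ((p x : ℂ) * deriv φ₂ x) := by
    funext x
    have hd : HasDerivAt (fun y => c₁ * φ₁ y + c₂ * φ₂ y)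
        (c₁ * deriv φ₁ x + c₂ * deriv φ₂ x) x :=
      ((h₁.hasDerivAt x).const_mul c₁).add ((h₂.hasDerivAt x).const_mul c₂)
    rw [hd.deriv]
    ring
  refine ⟨(contDiff_const.mul h₁.1).add (contDiff_const.mul h₂.1), ?_, fun x => ?_⟩
  · rw [hquasi]
    exact (contDiff_const.mul h₁.2.1).add (contDiff_const.mul h₂.2.1)
  · have hd : HasDerivAt (fun y => c₁ * ((p y : ℂ) * deriv φ₁ y) + c₂ * ((p y : ℂ) * deriv φ₂ y))
        (c₁ * ((q x - z * w x) * φ₁ x) + c₂ * ((q x - z * w x) * φ₂ x)) x :=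
      ((h₁.hasDerivAt_quasiDeriv x).const_mul c₁).add ((h₂.hasDerivAt_quasiDeriv x).const_mul c₂)
    rw [hquasi, hd.deriv]
    ring

theorem comp_neg (h : IsSLSolutionC p q w z φ) :
    IsSLSolutionC (fun x => p (-x)) (fun x => q (-x)) (fun x => w (-x)) z (fun x => φ (-x)) := by
  have hquasi : (fun x => (p (-x) : ℂ) * deriv (fun y => φ (-y)) x) =
      fun x => -((p (-x) : ℂ) * deriv φ (-x)) := by
    funext x
    rw [deriv_comp_neg]
    ring
  refine ⟨h.1.comp contDiff_neg, ?_, fun x => ?_⟩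
  · rw [hquasi]
    exact (h.2.1.comp contDiff_neg).neg
  · rw [hquasi, deriv.fun_neg, deriv_comp_neg (f := fun y => (p y : ℂ) * deriv φ y),
      (h.hasDerivAt_quasiDeriv (-x)).deriv]
    ring

theorem eq_zero_of_eq_zero_of_deriv_eq_zero {a K : ℝ} (ha : 0 < a) (hpa : ∀ x, a ≤ p x)
    (hV : ∀ x, ‖(q x : ℂ) - z * w x‖ ≤ K) (h : IsSLSolutionC p q w z φ) {x₀ : ℝ}
    (h₀ : φ x₀ = 0) (h₀' : deriv φ x₀ = 0) : φ = 0 := by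
  have hp : ∀ x, (p x : ℂ) ≠ 0 := fun x => Complex.ofReal_ne_zero.2 (ha.trans_le (hpa x)).ne'
  -- the equation as a first-order system for `(φ, p φ')`
  set v : ℝ → ℂ × ℂ → ℂ × ℂ := fun t y => ((p t : ℂ)⁻¹ * y.2, ((q t : ℂ) - z * w t) * y.1)
  have hLip : ∀ t, LipschitzWith (max a⁻¹ K).toNNReal (v t) := fun t => by
    have hL := ((lipschitzWith_smul (β := ℂ) ((p t : ℂ)⁻¹)).comp
      (LipschitzWith.prod_snd (α := ℂ) (β := ℂ))).prodMk
      ((lipschitzWith_smul (β := ℂ) ((q t : ℂ) - z * w t)).comp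
      (LipschitzWith.prod_fst (α := ℂ) (β := ℂ)))
    refine hL.weaken ?_
    have hK : 0 ≤ max a⁻¹ K := (inv_pos.2 ha).le.trans (le_max_left _ _)
    refine max_le ?_ ?_ <;> rw [mul_one, Real.le_toNNReal_iff_coe_le hK, coe_nnnorm]
    · rw [norm_inv, Complex.norm_real, Real.norm_of_nonneg (ha.le.trans (hpa t))]
      exact (inv_anti₀ ha (hpa t)).trans (le_max_left _ _)
    · exact (hV t).trans (le_max_right _ _)
  have hsys : (fun t => (φ t, (p t : ℂ) * deriv φ t)) = 0 := by
    refine ODE_solution_unique_univ (s := fun _ => univ) (fun t => (hLip t).lipschitzOnWith)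
      (fun t => ⟨?_, trivial⟩) (fun t => ⟨?_, trivial⟩) (t₀ := x₀) ?_
    · simpa [v, inv_mul_cancel_left₀ (hp t)] using
        (h.hasDerivAt t).prodMk (h.hasDerivAt_quasiDeriv t)
    · convert hasDerivAt_const t (0 : ℂ × ℂ) using 1 <;> first | rfl | simp [v]
    · simp [h₀, h₀']
  funext x
  exact congrArg Prod.fst (congrFun hsys x)

theorem hasDerivAt_inner_quasiDeriv (h : IsSLSolutionC p q w z φ) (x : ℝ) :
    HasDerivAt (fun y => ⟪φ y, (p y : ℂ) * deriv φ y⟫)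
      (⟪deriv φ x, (p x : ℂ) * deriv φ x⟫ + ⟪φ x, (q x - z * w x) * φ x⟫) x := by
  rw [add_comm]
  exact (h.hasDerivAt x).inner ℝ (h.hasDerivAt_quasiDeriv x)

theorem frequently_inner_quasiDeriv_le {A : ℝ} (hp : ∀ x, 0 ≤ p x) (hpA : ∀ x, p x ≤ A)
    (h : IsSLSolutionC p q w z φ) (hφ : IntegrableOn (fun x => ‖φ x‖ ^ 2) (Ici 0)) :
    ∃ᶠ x in atTop, ⟪φ x, (p x : ℂ) * deriv φ x⟫ ≤ A :=
  (frequently_deriv_lt_of_integrableOn_Ici (fun x => (h.hasDerivAt x).norm_sq) hφ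
    two_pos).mono fun x hx => by
    rw [Complex.real_inner_ofReal_mul_right]
    nlinarith [hp x, hpA x]

theorem integrableOn_norm_deriv_sq {a A K : ℝ} (ha : 0 < a) (hpa : ∀ x, a ≤ p x)
    (hpA : ∀ x, p x ≤ A) (hq : Continuous q) (hw : Continuous w)
    (hV : ∀ x, ‖(q x : ℂ) - z * w x‖ ≤ K) (h : IsSLSolutionC p q w z φ)
    (hφ : IntegrableOn (fun x => ‖φ x‖ ^ 2) (Ici 0)) :
    IntegrableOn (fun x => ‖deriv φ x‖ ^ 2) (Ici 0) := by
  set G := fun y => ⟪φ y, (p y : ℂ) * deriv φ y⟫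
  set g := fun y => ⟪deriv φ y, (p y : ℂ) * deriv φ y⟫
  set r := fun y => ⟪φ y, ((q y : ℂ) - z * w y) * φ y⟫
  have hg : ∀ x, g x = p x * ‖deriv φ x‖ ^ 2 := fun x => by
    simp only [g, Complex.real_inner_ofReal_mul_right, real_inner_self_eq_norm_sq]
  have hg_nonneg : ∀ x, 0 ≤ g x := fun x => hg x ▸ mul_nonneg (ha.le.trans (hpa x)) (sq_nonneg _)
  have hgc : Continuous g := h.continuous_deriv.inner h.2.1.continuous
  have hVc : Continuous fun y => (q y : ℂ) - z * w y :=
    (Complex.continuous_ofReal.comp hq).sub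
      (continuous_const.mul (Complex.continuous_ofReal.comp hw))
  have hrc : Continuous r := h.1.continuous.inner (hVc.mul h.1.continuous)
  have hr : IntegrableOn r (Ici 0) := integrableOn_inner_mul_self h.1.continuous hVc hV hφ
  have hfreq : ∃ᶠ x in atTop, G x ≤ A :=
    h.frequently_inner_quasiDeriv_le (fun x => ha.le.trans (hpa x)) hpA hφ
  have hgi : IntegrableOn g (Ici 0) := integrableOn_Ici_of_hasDerivAt_of_frequently_le
    h.hasDerivAt_inner_quasiDeriv hgc hg_nonneg hrc hr hfreq
  refine (hgi.const_mul a⁻¹).mono' (h.continuous_deriv.norm.pow 2).aestronglyMeasurable <|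
    .of_forall fun x => ?_
  rw [Real.norm_of_nonneg (by positivity), le_inv_mul_iff₀ ha, hg]
  exact mul_le_mul_of_nonneg_right (hpa x) (by positivity)

theorem wronskian_eq (h₁ : IsSLSolutionC p q w z φ₁) (h₂ : IsSLSolutionC p q w z φ₂)
    (x y : ℝ) : wronskian p φ₁ φ₂ x = wronskian p φ₁ φ₂ y := by
  have hW : ∀ x, HasDerivAt (wronskian p φ₁ φ₂) 0 x := fun x =>
    (((h₁.hasDerivAt x).mul (h₂.hasDerivAt_quasiDeriv x)).sub
      ((h₂.hasDerivAt x).mul (h₁.hasDerivAt_quasiDeriv x))).congr_deriv (by ring)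
  exact is_const_of_deriv_eq_zero (fun x => (hW x).differentiableAt) (fun x => (hW x).deriv) x y

theorem wronskian_eq_zero_of_integrableOn {A : ℝ} (hpA : ∀ x, |p x| ≤ A)
    (h₁ : IsSLSolutionC p q w z φ₁) (h₂ : IsSLSolutionC p q w z φ₂)
    (hφ₁ : IntegrableOn (fun x => ‖φ₁ x‖ ^ 2) (Ici 0))
    (hφ₁' : IntegrableOn (fun x => ‖deriv φ₁ x‖ ^ 2) (Ici 0))
    (hφ₂ : IntegrableOn (fun x => ‖φ₂ x‖ ^ 2) (Ici 0))
    (hφ₂' : IntegrableOn (fun x => ‖deriv φ₂ x‖ ^ 2) (Ici 0)) :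
    wronskian p φ₁ φ₂ 0 = 0 := by
  set u := fun x => φ₁ x * deriv φ₂ x - φ₂ x * deriv φ₁ x
  have hu : IntegrableOn u (Ici 0) :=
    (Integrable.mul_of_integrable_norm_sq h₁.1.continuous.aestronglyMeasurable
      h₂.continuous_deriv.aestronglyMeasurable hφ₁ hφ₂').sub
    (Integrable.mul_of_integrable_norm_sq h₂.1.continuous.aestronglyMeasurable
      h₁.continuous_deriv.aestronglyMeasurable hφ₂ hφ₁')
  have hWu : ∀ x, ‖wronskian p φ₁ φ₂ 0‖ ≤ A * ‖u x‖ := fun x => by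
    rw [h₁.wronskian_eq h₂ 0 x, show wronskian p φ₁ φ₂ x = p x * u x by
      simp only [wronskian, u]; ring, norm_mul, Complex.norm_real, Real.norm_eq_abs]
    gcongr
    exact hpA x
  by_contra hW
  have hA : 0 < A := by
    by_contra! hA
    have := hWu 0
    have := norm_pos_iff.2 hW
    nlinarith [norm_nonneg (u 0)]
  exact not_integrableOn_Ici_of_eventually_le_norm (by positivity)
    (.of_forall fun x => (div_le_iff₀' hA).2 (hWu x)) 0 hu

theorem exists_linear_dependence_of_wronskian_eq_zero {a K : ℝ} (ha : 0 < a)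
    (hpa : ∀ x, a ≤ p x) (hV : ∀ x, ‖(q x : ℂ) - z * w x‖ ≤ K)
    (h₁ : IsSLSolutionC p q w z φ₁) (h₂ : IsSLSolutionC p q w z φ₂) {x₀ : ℝ}
    (hW : wronskian p φ₁ φ₂ x₀ = 0) :
    ∃ c₁ c₂ : ℂ, ¬(c₁ = 0 ∧ c₂ = 0) ∧ ∀ x, c₁ * φ₁ x + c₂ * φ₂ x = 0 := by
  by_cases hφ₁ : ∀ x, φ₁ x = 0
  · exact ⟨1, 0, by simp, fun x => by simp [hφ₁ x]⟩
  push Not at hφ₁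
  obtain ⟨x₁, hx₁⟩ := hφ₁
  refine ⟨-φ₂ x₁, φ₁ x₁, fun hc => hx₁ hc.2, fun x =>
    congrFun (?_ : (fun y => -φ₂ x₁ * φ₁ y + φ₁ x₁ * φ₂ y) = 0) x⟩
  refine (h₁.linear_combination h₂ _ _).eq_zero_of_eq_zero_of_deriv_eq_zero ha hpa hV
    (x₀ := x₁) (by ring) ?_
  have hp : (p x₁ : ℂ) ≠ 0 := Complex.ofReal_ne_zero.2 (ha.trans_le (hpa x₁)).ne'
  have hW₁ : wronskian p φ₁ φ₂ x₁ = 0 := (h₁.wronskian_eq h₂ x₁ x₀).trans hW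
  have hd : HasDerivAt (fun y => -φ₂ x₁ * φ₁ y + φ₁ x₁ * φ₂ y)
      (-φ₂ x₁ * deriv φ₁ x₁ + φ₁ x₁ * deriv φ₂ x₁) x₁ :=
    ((h₁.hasDerivAt x₁).const_mul _).add ((h₂.hasDerivAt x₁).const_mul _)
  rw [hd.deriv]
  refine (mul_eq_zero.1 ?_).resolve_left hp
  rw [← hW₁, wronskian]
  ring

theorem exists_linear_dependence_of_integrableOn_Ici {a A b K : ℝ} (ha : 0 < a)
    (hpa : ∀ x, a ≤ p x) (hpA : ∀ x, |p x| ≤ A) (hb : 0 < b) (hwb : ∀ x, b ≤ w x)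
    (hq : Continuous q) (hw : Continuous w) (hV : ∀ x, ‖(q x : ℂ) - z * w x‖ ≤ K)
    (h₁ : IsSLSolutionC p q w z φ₁) (h₂ : IsSLSolutionC p q w z φ₂)
    (hφ₁ : IntegrableOn (fun x => ‖φ₁ x‖ ^ 2 * w x) (Ici 0))
    (hφ₂ : IntegrableOn (fun x => ‖φ₂ x‖ ^ 2 * w x) (Ici 0)) :
    ∃ c₁ c₂ : ℂ, ¬(c₁ = 0 ∧ c₂ = 0) ∧ ∀ x, c₁ * φ₁ x + c₂ * φ₂ x = 0 := by
  have hpA' : ∀ x, p x ≤ A := fun x => (le_abs_self _).trans (hpA x)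
  have hφ₁' := integrableOn_norm_sq_of_integrableOn_norm_sq_mul hb hwb h₁.1.continuous hφ₁
  have hφ₂' := integrableOn_norm_sq_of_integrableOn_norm_sq_mul hb hwb h₂.1.continuous hφ₂
  exact exists_linear_dependence_of_wronskian_eq_zero ha hpa hV h₁ h₂ <|
    wronskian_eq_zero_of_integrableOn hpA h₁ h₂
      hφ₁' (h₁.integrableOn_norm_deriv_sq ha hpa hpA' hq hw hV hφ₁')
      hφ₂' (h₂.integrableOn_norm_deriv_sq ha hpa hpA' hq hw hV hφ₂')

end IsSLSolutionC

/-- limit point property at `±∞`. -/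
theorem limit_point (p q w : ℝ → ℝ)
    (hp : APplus p) (hw : APplus w) (hq : BohrAP q) (z : ℂ)
    (φ₁ φ₂ : ℝ → ℂ)
    (h₁ : IsSLSolutionC p q w z φ₁) (h₂ : IsSLSolutionC p q w z φ₂) :
    (IntegrableOn (fun x => ‖φ₁ x‖ ^ 2 * w x) (Set.Ici 0) →
     IntegrableOn (fun x => ‖φ₂ x‖ ^ 2 * w x) (Set.Ici 0) →
      ∃ c₁ c₂ : ℂ, ¬(c₁ = 0 ∧ c₂ = 0) ∧ ∀ x : ℝ, c₁ * φ₁ x + c₂ * φ₂ x = 0) ∧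
    (IntegrableOn (fun x => ‖φ₁ x‖ ^ 2 * w x) (Set.Iic 0) →
     IntegrableOn (fun x => ‖φ₂ x‖ ^ 2 * w x) (Set.Iic 0) →
      ∃ c₁ c₂ : ℂ, ¬(c₁ = 0 ∧ c₂ = 0) ∧ ∀ x : ℝ, c₁ * φ₁ x + c₂ * φ₂ x = 0) := by
  obtain ⟨a, ha, hpa⟩ := hp.exists_pos_le
  obtain ⟨b, hb, hwb⟩ := hw.exists_pos_le
  obtain ⟨A, hpA⟩ := hp.1.exists_norm_le
  obtain ⟨B, hwB⟩ := hw.1.exists_norm_le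
  obtain ⟨Q, hqQ⟩ := hq.exists_norm_le
  simp only [Real.norm_eq_abs] at hpA
  have hV : ∀ x, ‖(q x : ℂ) - z * w x‖ ≤ Q + ‖z‖ * B := fun x => by
    refine (norm_sub_le _ _).trans ?_
    rw [norm_mul, Complex.norm_real, Complex.norm_real]
    gcongr
    exacts [hqQ x, hwB x]
  refine ⟨IsSLSolutionC.exists_linear_dependence_of_integrableOn_Ici ha hpa hpA hb hwb hq.1
    hw.1.1 hV h₁ h₂, fun hφ₁ hφ₂ => ?_⟩
  obtain ⟨c₁, c₂, hc, hdep⟩ := IsSLSolutionC.exists_linear_dependence_of_integrableOn_Ici ha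
    (fun x => hpa (-x)) (fun x => hpA (-x)) hb (fun x => hwb (-x)) (hq.1.comp continuous_neg)
    (hw.1.1.comp continuous_neg) (fun x => hV (-x)) h₁.comp_neg h₂.comp_neg
    (integrableOn_Ici_comp_neg (by rw [neg_zero]; exact hφ₁))
    (integrableOn_Ici_comp_neg (by rw [neg_zero]; exact hφ₂))
  exact ⟨c₁, c₂, hc, fun x => by simpa using hdep (-x)⟩
end
end
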